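/- Let n ≥ 1 and let A be a real n×n matrix satisfying the cyclic non-increasing condition such that Ae < 0 (all row sums strictly negative). Then det A = 0 if the graph 𝒢(A) has more than one closed strongly connected component, and det A < 0 if 𝒢(A) has exactly one closed strongly connected component. -/

import Mathlib

/-!
Put `D i j = A i j - A i (j - 1)`. Then `D` is a Laplacian-type matrix: its off-diagonal
entries are `≤ 0`, its rows sum to `0`, and `D i j < 0` exactly on the edges of `𝒢(A)`.
Moreover `(π ᵥ* D) j = (π ᵥ* A) j - (π ᵥ* A) (j - 1)`, so `π ᵥ* D = 0` means that `π ᵥ* A`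
is constant.

A closed SCC `C` carries a nonzero left null vector of `D` supported on `C`. Two closed SCCs give
two such vectors with disjoint supports, and a suitable combination of them is a left null vector
of `A`.

If the closed SCC is unique, every vertex reaches it, and a maximum principle shows that the
kernel of `D` consists of constants. Hence the columns of `adj D` are constant, so
`adj D i k = adj D k k ≥ 0` (a principal minor of a weakly diagonally dominant matrix), with
strict inequality at a vertex of the closed SCC. Column operations give
`n * det A = det [A e | D₂ | … | Dₙ] = ∑ k, adj D 0 k * (A e) k < 0`.
-/

open Matrix BigOperators

/-- The cyclic non-increasing condition: each row of `A` weakly decreases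
cyclically starting from the diagonal, i.e. `a_{i[j-1]} ≥ a_{ij}` for all
`j ≠ i` (indices in `Fin n`, arithmetic mod `n`). -/
def CyclicNonIncr {n : ℕ} [NeZero n] (A : Matrix (Fin n) (Fin n) ℝ) : Prop :=
  ∀ i j : Fin n, j ≠ i → A i (j - 1) ≥ A i j

/-- The directed graph `𝒢(A)` has an edge from `i` to `j` iff `a_{i[j-1]} > a_{ij}`. -/
def GraphEdge {n : ℕ} [NeZero n] (A : Matrix (Fin n) (Fin n) ℝ) (i j : Fin n) : Prop :=
  A i (j - 1) > A i j

/-- `i` and `j` are strongly connected in `𝒢(A)`: there are directed paths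
(possibly of length 0) from `i` to `j` and from `j` to `i`. -/
def Conn {n : ℕ} [NeZero n] (A : Matrix (Fin n) (Fin n) ℝ) (i j : Fin n) : Prop :=
  Relation.ReflTransGen (GraphEdge A) i j ∧ Relation.ReflTransGen (GraphEdge A) j i

/-- `C` is a strongly connected component of `𝒢(A)`: an equivalence class of
the strong-connectivity relation. -/
def IsSCC {n : ℕ} [NeZero n] (A : Matrix (Fin n) (Fin n) ℝ) (C : Set (Fin n)) : Prop :=
  ∃ i, C = {j | Conn A i j}

/-- `C` is a closed SCC of `𝒢(A)`: an SCC with no edge leaving it. -/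
def IsClosedSCC {n : ℕ} [NeZero n] (A : Matrix (Fin n) (Fin n) ℝ) (C : Set (Fin n)) : Prop :=
  IsSCC A C ∧ ∀ i ∈ C, ∀ j, GraphEdge A i j → j ∈ C

/-- `C` is an open SCC of `𝒢(A)`: an SCC with some edge leaving it. -/
def IsOpenSCC {n : ℕ} [NeZero n] (A : Matrix (Fin n) (Fin n) ℝ) (C : Set (Fin n)) : Prop :=
  IsSCC A C ∧ ¬ (∀ i ∈ C, ∀ j, GraphEdge A i j → j ∈ C)

open Finset Filter Topology

namespace Matrix

variable {ι : Type*} [Fintype ι] {M : Matrix ι ι ℝ}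

-- Deform the off-diagonal part to `0`; by Levy–Desplanques the determinant never vanishes.
theorem det_pos_of_sum_row_lt_diag [DecidableEq ι]
    (h : ∀ k, ∑ j ∈ univ.erase k, |M k j| < M k k) : 0 < M.det := by
  set P : ℝ → Matrix ι ι ℝ := fun t => of fun i j => if i = j then M i j else t * M i j
  have hcont : Continuous fun t => (P t).det :=
    Continuous.matrix_det (continuous_pi fun i => continuous_pi fun j => by
      simp only [P, of_apply]; split_ifs <;> fun_prop)
  have hne : ∀ t ∈ Set.Icc (0 : ℝ) 1, (P t).det ≠ 0 := by
    rintro t ⟨ht0, ht1⟩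
    refine det_ne_zero_of_sum_row_lt_diag fun k => ?_
    calc ∑ j ∈ univ.erase k, ‖P t k j‖ = t * ∑ j ∈ univ.erase k, |M k j| := by
          rw [mul_sum]
          refine sum_congr rfl fun j hj => ?_
          simp [P, (ne_of_mem_erase hj).symm, abs_of_nonneg ht0]
      _ ≤ ∑ j ∈ univ.erase k, |M k j| :=
          mul_le_of_le_one_left (sum_nonneg fun _ _ => abs_nonneg _) ht1
      _ < M k k := h k
      _ ≤ ‖P t k k‖ := by simp [P, Real.norm_eq_abs, le_abs_self]
  have h0 : 0 < (P 0).det := by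
    have : P 0 = diagonal fun k => M k k := by
      ext i j; by_cases hij : i = j <;> simp [P, hij]
    rw [this, det_diagonal]
    exact prod_pos fun k _ => (sum_nonneg fun _ _ => abs_nonneg _).trans_lt (h k)
  have h1 : P 1 = M := by ext i j; by_cases hij : i = j <;> simp [P, hij]
  by_contra hM
  obtain ⟨t, ht, ht0⟩ := intermediate_value_Icc' zero_le_one hcont.continuousOn
    ⟨h1 ▸ not_lt.1 hM, h0.le⟩
  exact hne t ht ht0

theorem det_nonneg_of_sum_row_le_diag [DecidableEq ι]
    (h : ∀ k, ∑ j ∈ univ.erase k, |M k j| ≤ M k k) : 0 ≤ M.det := by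
  set P : ℝ → Matrix ι ι ℝ := fun ε => M + diagonal fun _ => ε
  have hcont : Continuous fun ε => (P ε).det := Continuous.matrix_det (by fun_prop)
  have hpos : ∀ ε > 0, 0 < (P ε).det := fun ε hε =>
    det_pos_of_sum_row_lt_diag fun k => by
      have hoff : ∀ j ∈ univ.erase k, |P ε k j| = |M k j| := fun j hj => by
        simp [P, (ne_of_mem_erase hj).symm]
      rw [sum_congr rfl hoff]
      simpa [P] using (h k).trans_lt (lt_add_of_pos_right _ hε)
  have hlim : Tendsto (fun ε => (P ε).det) (𝓝[>] 0) (𝓝 M.det) := by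
    simpa [P] using (hcont.tendsto 0).mono_left nhdsWithin_le_nhds
  exact ge_of_tendsto hlim (eventually_nhdsWithin_of_forall fun ε hε => (hpos ε hε).le)

theorem det_nonneg_of_offDiag_nonpos_of_sum_nonneg [DecidableEq ι]
    (hoff : ∀ i j, i ≠ j → M i j ≤ 0) (hsum : ∀ i, 0 ≤ ∑ j, M i j) : 0 ≤ M.det :=
  det_nonneg_of_sum_row_le_diag fun k => by
    have habs : ∀ j ∈ univ.erase k, |M k j| = -M k j := fun j hj =>
      abs_of_nonpos (hoff k j (ne_of_mem_erase hj).symm)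
    have := hsum k
    rw [← add_sum_erase _ _ (mem_univ k)] at this
    rw [sum_congr rfl habs, sum_neg_distrib]
    linarith

theorem exists_vecMul_eq_zero_of_sum_eq_zero_on {C : Set ι} (hC : C.Nonempty)
    (hsum : ∀ i ∈ C, ∑ j, M i j = 0) (hout : ∀ i ∈ C, ∀ j ∉ C, M i j = 0) :
    ∃ π ≠ 0, (∀ j ∉ C, π j = 0) ∧ π ᵥ* M = 0 := by
  classical
  have hsubtype : ∀ f : ι → ℝ, (∀ j ∉ C, f j = 0) → ∑ a : C, f a = ∑ j, f j := fun f hf => by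
    have := Fintype.sum_subtype_add_sum_subtype (· ∈ C) f
    rwa [Fintype.sum_eq_zero (fun j : {j // j ∉ C} => f j) fun j => hf j j.2, add_zero]
      at this
  set Q := M.submatrix ((↑) : C → ι) ((↑) : C → ι)
  have : Nonempty C := hC.to_subtype
  have hQ : Q.det = 0 := by
    refine exists_mulVec_eq_zero_iff.1 ⟨fun _ => 1, Function.ne_iff.2 ⟨Classical.arbitrary C,
      one_ne_zero⟩, funext fun a => ?_⟩
    simpa [Q, mulVec, dotProduct, hsubtype _ (hout a a.2)] using hsum a a.2
  obtain ⟨v, hv0, hv⟩ := exists_vecMul_eq_zero_iff.2 hQ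
  set π := Function.extend ((↑) : C → ι) v 0
  have hπC : ∀ a : C, π a = v a := Subtype.val_injective.extend_apply v 0
  have hπout : ∀ j ∉ C, π j = 0 := fun j hj =>
    Function.extend_apply' _ _ _ fun ⟨a, ha⟩ => hj (ha ▸ a.2)
  refine ⟨π, ?_, hπout, funext fun j => ?_⟩
  · obtain ⟨a, ha⟩ := Function.ne_iff.1 hv0
    exact Function.ne_iff.2 ⟨a, (hπC a).trans_ne ha⟩
  · have hπM : (π ᵥ* M) j = ∑ a : C, v a * M a j := by
      rw [vecMul, dotProduct, ← hsubtype _ fun i hi => by rw [hπout i hi, zero_mul]]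
      simp only [hπC]
    by_cases hj : j ∈ C
    · rw [Pi.zero_apply, hπM]
      simpa [Q, vecMul, dotProduct] using congrFun hv ⟨j, hj⟩
    · rw [Pi.zero_apply, hπM]
      simp [hout _ (Subtype.prop _) j hj]

section Laplacian

variable (hoff : ∀ i j, i ≠ j → M i j ≤ 0) (hsum : ∀ i, ∑ j, M i j = 0)
include hoff hsum

theorem apply_eq_of_mulVec_apply_eq_zero_of_isMax {x : ι → ℝ} {p q : ι}
    (hx : (M *ᵥ x) p = 0) (hmax : ∀ l, x l ≤ x p) (hpq : M p q < 0) : x q = x p := by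
  have hcentered : ∑ l, M p l * (x l - x p) = 0 := by
    simp only [mul_sub, sum_sub_distrib, ← sum_mul, hsum p, zero_mul, sub_zero]
    exact hx
  have hterm : ∀ l ∈ univ, 0 ≤ M p l * (x l - x p) := fun l _ => by
    obtain rfl | hl := eq_or_ne p l
    · simp
    · exact mul_nonneg_of_nonpos_of_nonpos (hoff p l hl) (sub_nonpos.2 (hmax l))
  have := (sum_eq_zero_iff_of_nonneg hterm).1 hcentered q (mem_univ q)
  exact sub_eq_zero.1 ((mul_eq_zero.1 this).resolve_left hpq.ne)

variable {i₀ : ι} (hreach : ∀ j, Relation.ReflTransGen (fun i j => M i j < 0) j i₀)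
include hreach

theorem le_apply_root_of_mulVec_eq_zero {x : ι → ℝ} (hx : ∀ p ≠ i₀, (M *ᵥ x) p = 0)
    (k : ι) : x k ≤ x i₀ := by
  have : Nonempty ι := ⟨i₀⟩
  obtain ⟨k₀, hk₀⟩ := Finite.exists_max x
  by_contra! hlt
  have hclosed : ∀ p q, x p = x k₀ → M p q < 0 → x q = x k₀ := by
    intro p q hp hpq
    have hp₀ : p ≠ i₀ := by rintro rfl; linarith [hk₀ k]
    rw [← hp]
    exact apply_eq_of_mulVec_apply_eq_zero_of_isMax hoff hsum (hx p hp₀) (hp ▸ hk₀) hpq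
  have hpath : ∀ j, Relation.ReflTransGen (fun i j => M i j < 0) k₀ j → x j = x k₀ := by
    intro j h
    induction h with
    | refl => rfl
    | tail _ hpq ih => exact hclosed _ _ ih hpq
  linarith [hk₀ k, hpath i₀ (hreach k₀)]

theorem apply_eq_root_of_mulVec_eq_zero {x : ι → ℝ} (hx : ∀ p ≠ i₀, (M *ᵥ x) p = 0)
    (k : ι) : x k = x i₀ := by
  refine le_antisymm (le_apply_root_of_mulVec_eq_zero hoff hsum hreach hx k) ?_
  have hnx : ∀ p ≠ i₀, (M *ᵥ -x) p = 0 := fun p hp => by simp [mulVec_neg, hx p hp]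
  simpa using le_apply_root_of_mulVec_eq_zero hoff hsum hreach hnx k

variable [DecidableEq ι]

theorem adjugate_apply_eq_adjugate_apply_self (i k : ι) : adjugate M i k = adjugate M k k := by
  have hdet : M.det = 0 := by
    refine exists_mulVec_eq_zero_iff.1
      ⟨fun _ => 1, Function.ne_iff.2 ⟨i, one_ne_zero⟩, funext fun p => ?_⟩
    simpa [mulVec, dotProduct] using hsum p
  have hcol : ∀ p, (M *ᵥ fun m => adjugate M m k) p = 0 := fun p => by
    change (M * adjugate M) p k = 0
    simp [mul_adjugate, hdet]
  have := apply_eq_root_of_mulVec_eq_zero hoff hsum hreach (fun p _ => hcol p)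
  rw [this i, this k]

omit hreach in
theorem adjugate_apply_self_nonneg (k : ι) : 0 ≤ adjugate M k k := by
  rw [adjugate_apply]
  refine det_nonneg_of_offDiag_nonpos_of_sum_nonneg (fun i j hij => ?_) (fun i => ?_)
  · obtain rfl | hi := eq_or_ne i k
    · simp [hij.symm]
    · simpa [updateRow_ne hi] using hoff i j hij
  · obtain rfl | hi := eq_or_ne i k
    · simp
    · simp [updateRow_ne hi, hsum i]

theorem adjugate_apply_root_root_ne_zero : adjugate M i₀ i₀ ≠ 0 := by
  rw [adjugate_apply]
  intro hdet
  obtain ⟨x, hx0, hx⟩ := exists_mulVec_eq_zero_iff.2 hdet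
  have hxi₀ : x i₀ = 0 := by simpa [mulVec, dotProduct, Pi.single_apply] using congrFun hx i₀
  have hker : ∀ p ≠ i₀, (M *ᵥ x) p = 0 := fun p hp => by
    simpa [mulVec, updateRow_ne hp] using congrFun hx p
  exact hx0 <| funext fun k =>
    (apply_eq_root_of_mulVec_eq_zero hoff hsum hreach hker k).trans hxi₀

theorem adjugate_nonneg (i k : ι) : 0 ≤ adjugate M i k :=
  adjugate_apply_eq_adjugate_apply_self hoff hsum hreach i k ▸
    adjugate_apply_self_nonneg hoff hsum k

theorem adjugate_apply_root_pos (i : ι) : 0 < adjugate M i i₀ :=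
  adjugate_apply_eq_adjugate_apply_self hoff hsum hreach i i₀ ▸
    (adjugate_apply_self_nonneg hoff hsum i₀).lt_of_ne'
      (adjugate_apply_root_root_ne_zero hoff hsum hreach)

end Laplacian

end Matrix

theorem Fin.apply_eq_apply_zero_of_apply_sub_one {n : ℕ} [NeZero n] {α : Type*}
    {f : Fin n → α} (h : ∀ j ≠ 0, f j = f (j - 1)) (j : Fin n) : f j = f 0 := by
  obtain ⟨k, hk⟩ := j
  induction k with
  | zero => rfl
  | succ k ih =>
    have hne : (⟨k + 1, hk⟩ : Fin n) ≠ 0 := Fin.ne_of_val_ne (by simp)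
    rw [h _ hne, ← ih (by omega)]
    congr 1
    ext
    rw [Fin.val_sub_one_of_ne_zero hne]
    rfl

theorem Relation.exists_reflTransGen_terminal {α : Type*} [Finite α] (r : α → α → Prop)
    (a : α) : ∃ b, ReflTransGen r a b ∧ ∀ c, ReflTransGen r b c → ReflTransGen r c b := by
  obtain ⟨b, hab, hmin⟩ := Set.exists_min_image {b | ReflTransGen r a b}
    (fun b => {c | ReflTransGen r b c}.ncard) (Set.toFinite _) ⟨a, .refl⟩
  refine ⟨b, hab, fun c hbc => ?_⟩
  have hsub : {d | ReflTransGen r c d} ⊆ {d | ReflTransGen r b d} := fun d hcd => hbc.trans hcd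
  have heq := Set.eq_of_subset_of_ncard_le hsub (hmin c (hab.trans hbc)) (Set.toFinite _)
  have hb : b ∈ {d | ReflTransGen r c d} := heq ▸ ReflTransGen.refl
  exact hb

variable {n : ℕ} [NeZero n] {A : Matrix (Fin n) (Fin n) ℝ}

theorem Conn.symm {i j : Fin n} (h : Conn A i j) : Conn A j i := ⟨h.2, h.1⟩

theorem Conn.trans {i j k : Fin n} (h₁ : Conn A i j) (h₂ : Conn A j k) : Conn A i k :=
  ⟨h₁.1.trans h₂.1, h₂.2.trans h₁.2⟩

theorem IsSCC.eq_setOf_conn {C : Set (Fin n)} (hC : IsSCC A C) {i : Fin n} (hi : i ∈ C) :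
    C = {j | Conn A i j} := by
  obtain ⟨i₀, rfl⟩ := hC
  ext j
  exact ⟨fun hj => (Conn.symm hi).trans hj, fun hj => Conn.trans hi hj⟩

theorem IsSCC.disjoint {C₁ C₂ : Set (Fin n)} (h₁ : IsSCC A C₁) (h₂ : IsSCC A C₂)
    (hne : C₁ ≠ C₂) : Disjoint C₁ C₂ :=
  Set.disjoint_left.2 fun _ hk₁ hk₂ =>
    hne <| (h₁.eq_setOf_conn hk₁).trans (h₂.eq_setOf_conn hk₂).symm

theorem IsClosedSCC.nonempty {C : Set (Fin n)} (hC : IsClosedSCC A C) : C.Nonempty := by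
  obtain ⟨i, rfl⟩ := hC.1
  exact ⟨i, .refl, .refl⟩

theorem exists_isClosedSCC_reflTransGen (A : Matrix (Fin n) (Fin n) ℝ) (j : Fin n) :
    ∃ C, IsClosedSCC A C ∧ ∃ b ∈ C, Relation.ReflTransGen (GraphEdge A) j b := by
  obtain ⟨b, hjb, hb⟩ := Relation.exists_reflTransGen_terminal (GraphEdge A) j
  refine ⟨{k | Conn A b k}, ⟨⟨b, rfl⟩, fun p hp q hpq => ?_⟩, b, ⟨.refl, .refl⟩, hjb⟩
  have hbq : Relation.ReflTransGen (GraphEdge A) b q := hp.1.tail hpq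
  exact ⟨hbq, hb q hbq⟩

theorem reflTransGen_of_unique_isClosedSCC {C : Set (Fin n)} (hC : IsClosedSCC A C)
    (huniq : ∀ C', IsClosedSCC A C' → C' = C) {i₀ : Fin n} (hi₀ : i₀ ∈ C) (j : Fin n) :
    Relation.ReflTransGen (GraphEdge A) j i₀ := by
  obtain ⟨C', hC', b, hb, hjb⟩ := exists_isClosedSCC_reflTransGen A j
  rw [huniq C' hC'] at hb
  rw [hC.1.eq_setOf_conn hb] at hi₀
  exact hjb.trans hi₀.1

def cyclicDiff (A : Matrix (Fin n) (Fin n) ℝ) : Matrix (Fin n) (Fin n) ℝ :=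
  of fun i j => A i j - A i (j - 1)

theorem cyclicDiff_apply (i j : Fin n) : cyclicDiff A i j = A i j - A i (j - 1) := rfl

theorem sum_cyclicDiff_apply (i : Fin n) : ∑ j, cyclicDiff A i j = 0 := by
  simp only [cyclicDiff_apply, sum_sub_distrib,
    Fintype.sum_equiv (Equiv.subRight 1) (fun j => A i (j - 1)) (A i) fun _ => rfl, sub_self]

theorem CyclicNonIncr.cyclicDiff_nonpos (hA : CyclicNonIncr A) {i j : Fin n} (hij : i ≠ j) :
    cyclicDiff A i j ≤ 0 :=
  sub_nonpos.2 (hA i j hij.symm)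

theorem graphEdge_iff_cyclicDiff_neg {i j : Fin n} : GraphEdge A i j ↔ cyclicDiff A i j < 0 :=
  sub_neg.symm

theorem vecMul_cyclicDiff (π : Fin n → ℝ) (j : Fin n) :
    (π ᵥ* cyclicDiff A) j = (π ᵥ* A) j - (π ᵥ* A) (j - 1) := by
  simp only [vecMul, dotProduct, cyclicDiff_apply, mul_sub, sum_sub_distrib]

-- The columns of `A` telescope as `A_j = A_{j-1} + D_j`, so each contributes the same
-- determinant; and `D` with first column `A_0` is `A * U` for a unitriangular `U`.
theorem cramer_cyclicDiff_mulVec_one_zero (A : Matrix (Fin n) (Fin n) ℝ) :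
    cramer (cyclicDiff A) (A *ᵥ fun _ => 1) 0 = n * A.det := by
  set D := cyclicDiff A
  have hstep : ∀ j ≠ 0, cramer D (fun i => A i j) 0 = cramer D (fun i => A i (j - 1)) 0 := by
    intro j hj
    have hcol : (fun i => A i j) = (fun i => A i (j - 1)) + Dᵀ j := by
      ext i; simp [D, cyclicDiff_apply]
    have hzero : cramer D (Dᵀ j) 0 = 0 := by
      simpa [Pi.single_apply, hj.symm] using congrFun (cramer_transpose_row_self Dᵀ j) 0
    rw [hcol, map_add, Pi.add_apply, hzero, add_zero]
  have hval : ∀ k j : Fin n, j ≠ 0 → k = j - 1 → k.val + 1 = j.val := fun k j hj hk => by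
    have h0 : j.val ≠ 0 := Fin.val_ne_zero_iff.2 hj
    have := Fin.val_sub_one_of_ne_zero hj
    rw [← hk] at this
    omega
  set U : Matrix (Fin n) (Fin n) ℝ := 1 - of fun k j => if j ≠ 0 ∧ k = j - 1 then 1 else 0
  have hU : U.det = 1 := by
    refine (det_of_isUpperTriangular fun k j (hjk : j < k) => ?_).trans
      (prod_eq_one fun k _ => ?_)
    · have hkj : ¬(j ≠ 0 ∧ k = j - 1) := fun ⟨hj, hk⟩ => by have := hval k j hj hk; omega
      simp [U, hjk.ne', hkj]
    · have hkk : ¬(k ≠ 0 ∧ k = k - 1) := fun ⟨hk, hk'⟩ => by have := hval k k hk hk'; omega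
      simp [U, hkk]
  have hfirst : cramer D (fun i => A i 0) 0 = A.det := by
    have : D.updateCol 0 (fun i => A i 0) = A * U := by
      ext i j
      by_cases hj : j = 0 <;> simp [D, U, cyclicDiff_apply, hj, mul_sub, Matrix.mul_apply,
        Matrix.one_apply]
    rw [cramer_apply, this, det_mul, hU, mul_one]
  have hsum : (A *ᵥ fun _ => 1) = ∑ j, fun i => A i j := by
    ext i; simp [mulVec, dotProduct]
  rw [hsum, map_sum, Finset.sum_apply]
  simp [Fin.apply_eq_apply_zero_of_apply_sub_one (f := fun j => cramer D (fun i => A i j) 0)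
    hstep, hfirst]

theorem CyclicNonIncr.cyclicDiff_eq_zero_of_isClosedSCC (hA : CyclicNonIncr A)
    {C : Set (Fin n)} (hC : IsClosedSCC A C) {i j : Fin n} (hi : i ∈ C) (hj : j ∉ C) :
    cyclicDiff A i j = 0 :=
  (hA.cyclicDiff_nonpos (ne_of_mem_of_not_mem hi hj)).antisymm <|
    not_lt.1 fun h => hj (hC.2 i hi j (graphEdge_iff_cyclicDiff_neg.2 h))

theorem CyclicNonIncr.exists_vecMul_eq_const (hA : CyclicNonIncr A) {C : Set (Fin n)}
    (hC : IsClosedSCC A C) : ∃ π ≠ 0, (∀ j ∉ C, π j = 0) ∧ ∀ j, (π ᵥ* A) j = (π ᵥ* A) 0 := by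
  obtain ⟨π, hπ0, hπC, hπD⟩ := exists_vecMul_eq_zero_of_sum_eq_zero_on hC.nonempty
    (fun i _ => sum_cyclicDiff_apply i) fun _ hi _ hj =>
      hA.cyclicDiff_eq_zero_of_isClosedSCC hC hi hj
  refine ⟨π, hπ0, hπC, Fin.apply_eq_apply_zero_of_apply_sub_one fun j _ => ?_⟩
  rw [← sub_eq_zero, ← vecMul_cyclicDiff, hπD, Pi.zero_apply]

theorem CyclicNonIncr.det_eq_zero_of_isClosedSCC (hA : CyclicNonIncr A)
    {C₁ C₂ : Set (Fin n)} (h₁ : IsClosedSCC A C₁) (h₂ : IsClosedSCC A C₂) (hne : C₁ ≠ C₂) :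
    A.det = 0 := by
  obtain ⟨π₁, hπ₁, hπ₁C, hc₁⟩ := hA.exists_vecMul_eq_const h₁
  obtain ⟨π₂, hπ₂, hπ₂C, hc₂⟩ := hA.exists_vecMul_eq_const h₂
  set c₁ := (π₁ ᵥ* A) 0
  set c₂ := (π₂ ᵥ* A) 0
  rw [← exists_vecMul_eq_zero_iff]
  by_cases hc : c₁ = 0
  · exact ⟨π₁, hπ₁, funext fun j => (hc₁ j).trans hc⟩
  obtain ⟨j, hj⟩ := Function.ne_iff.1 hπ₂
  have hj₂ : j ∈ C₂ := not_imp_comm.1 (hπ₂C j) hj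
  have hj₁ : j ∉ C₁ := Set.disjoint_right.1 (h₁.1.disjoint h₂.1 hne) hj₂
  refine ⟨c₂ • π₁ - c₁ • π₂, Function.ne_iff.2 ⟨j, by simpa [hπ₁C j hj₁, hc] using hj⟩,
    funext fun k => ?_⟩
  simp [sub_vecMul, smul_vecMul, hc₁ k, hc₂ k, mul_comm]

theorem CyclicNonIncr.det_neg_of_unique_isClosedSCC (hA : CyclicNonIncr A)
    (hrow : ∀ i, (A *ᵥ fun _ => 1) i < 0) {C : Set (Fin n)} (hC : IsClosedSCC A C)
    (huniq : ∀ C', IsClosedSCC A C' → C' = C) : A.det < 0 := by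
  obtain ⟨i₀, hi₀⟩ := hC.nonempty
  have hoff : ∀ i j, i ≠ j → cyclicDiff A i j ≤ 0 := fun _ _ => hA.cyclicDiff_nonpos
  have hreach : ∀ j, Relation.ReflTransGen (fun i j => cyclicDiff A i j < 0) j i₀ := fun j =>
    Relation.ReflTransGen.mono (fun _ _ => graphEdge_iff_cyclicDiff_neg.1) _ _
      (reflTransGen_of_unique_isClosedSCC hC huniq hi₀ j)
  have hdet : (n : ℝ) * A.det = ∑ k, adjugate (cyclicDiff A) 0 k * (A *ᵥ fun _ => 1) k := by
    rw [← cramer_cyclicDiff_mulVec_one_zero, cramer_eq_adjugate_mulVec]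
    rfl
  refine neg_of_mul_neg_right (hdet ▸ sum_neg' (fun k _ => ?_) ⟨i₀, mem_univ _, ?_⟩)
    (Nat.cast_nonneg n)
  · exact mul_nonpos_of_nonneg_of_nonpos
      (adjugate_nonneg hoff sum_cyclicDiff_apply hreach 0 k) (hrow k).le
  · exact mul_neg_of_pos_of_neg (adjugate_apply_root_pos hoff sum_cyclicDiff_apply hreach 0)
      (hrow i₀)

theorem stmt_11_general (n : ℕ) [NeZero n] (A : Matrix (Fin n) (Fin n) ℝ)
    (hA : CyclicNonIncr A)
    (hrow : ∀ i, A.mulVec (fun _ => (1 : ℝ)) i < 0) :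
    ((∃ C₁ C₂ : Set (Fin n), IsClosedSCC A C₁ ∧ IsClosedSCC A C₂ ∧ C₁ ≠ C₂) →
      A.det = 0) ∧
    ((∃ C : Set (Fin n), IsClosedSCC A C ∧
      ∀ C' : Set (Fin n), IsClosedSCC A C' → C' = C) → A.det < 0) :=
  ⟨fun ⟨_, _, h₁, h₂, hne⟩ => hA.det_eq_zero_of_isClosedSCC h₁ h₂ hne,
    fun ⟨_, hC, huniq⟩ => hA.det_neg_of_unique_isClosedSCC hrow hC huniq⟩

theorem stmt_11 (n : ℕ) [NeZero n] (hn : 1 ≤ n) (A : Matrix (Fin n) (Fin n) ℝ)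
    (hA : CyclicNonIncr A)
    (hrow : ∀ i, A.mulVec (fun _ => (1 : ℝ)) i < 0) :
    ((∃ C₁ C₂ : Set (Fin n), IsClosedSCC A C₁ ∧ IsClosedSCC A C₂ ∧ C₁ ≠ C₂) →
      A.det = 0) ∧
    ((∃ C : Set (Fin n), IsClosedSCC A C ∧
      ∀ C' : Set (Fin n), IsClosedSCC A C' → C' = C) → A.det < 0) :=
  stmt_11_general n A hA hrow
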